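/- Let a > 0, ρ ∈ (0,1], P symmetric positive definite, and suppose e ∈ ℝ^{3n}-valued quantities satisfy: (i) eᵀ(M_P + aρ²M₁ + a(1-ρ²)M₂)e ≤ 0, (ii) φ(ξ_{k+1}) - φ(ξ_k) ≤ eᵀM₁e, (iii) φ(ξ_{k+1}) - φ* ≤ eᵀM₂e, and (iv) eᵀM_P e = (x_{k+1}-x*)ᵀP(x_{k+1}-x*) - ρ²(x_k-x*)ᵀP(x_k-x*). Then with V_k := ρ^{-2k}(a(φ(ξ_k) - φ*) + (x_k - x*)ᵀP(x_k - x*)), it holds that V_{k+1} ≤ V_k. -/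
import Mathlib


open Matrix

/-- One-step Lyapunov decrease in the proof of Theorem 2: given the quadratic-form
inequality (i), the function-increment bounds (ii)-(iii), and the identity (iv) relating
`eᵀ M_P e` to the weighted difference of quadratic Lyapunov terms, the time-scaled
Lyapunov sequence `V_k = ρ^{-2k}(a(φ(ξ_k) - φ*) + (x_k - x*)ᵀ P (x_k - x*))` is
nonincreasing. -/
theorem stmt_14 {α : Type*} {ι κ : Type*} [Fintype ι] [Fintype κ] [DecidableEq κ]
    (a ρ : ℝ) (ha : 0 < a) (hρ : ρ ∈ Set.Ioc (0 : ℝ) 1)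
    (P : Matrix κ κ ℝ) (hPsymm : P.IsSymm) (hPpd : P.PosDef)
    (MP M1 M2 : Matrix ι ι ℝ)
    (φ : α → ℝ) (φstar : ℝ) (ξ : ℕ → α)
    (x : ℕ → (κ → ℝ)) (xstar : κ → ℝ) (e : ℕ → (ι → ℝ))
    (h1 : ∀ k, e k ⬝ᵥ (MP + (a * ρ ^ 2) • M1 + (a * (1 - ρ ^ 2)) • M2).mulVec (e k) ≤ 0)
    (h2 : ∀ k, φ (ξ (k + 1)) - φ (ξ k) ≤ e k ⬝ᵥ M1.mulVec (e k))
    (h3 : ∀ k, φ (ξ (k + 1)) - φstar ≤ e k ⬝ᵥ M2.mulVec (e k))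
    (h4 : ∀ k, e k ⬝ᵥ MP.mulVec (e k)
      = (x (k + 1) - xstar) ⬝ᵥ P.mulVec (x (k + 1) - xstar)
        - ρ ^ 2 * ((x k - xstar) ⬝ᵥ P.mulVec (x k - xstar))) :
    ∀ k, (ρ ^ (2 * (k + 1)))⁻¹ *
        (a * (φ (ξ (k + 1)) - φstar) + (x (k + 1) - xstar) ⬝ᵥ P.mulVec (x (k + 1) - xstar))
      ≤ (ρ ^ (2 * k))⁻¹ *
          (a * (φ (ξ k) - φstar) + (x k - xstar) ⬝ᵥ P.mulVec (x k - xstar)) := by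
  obtain ⟨hρ0, hρ1⟩ := hρ
  intro k
  have h1' := h1 k
  simp only [Matrix.add_mulVec, Matrix.smul_mulVec, dotProduct_add,
    dotProduct_smul, smul_eq_mul] at h1'
  have h2' := h2 k
  have h3' := h3 k
  have h4' := h4 k
  have hρ2 : 0 < ρ ^ 2 := by positivity
  have hρ2' : ρ ^ 2 ≤ 1 := by nlinarith
  have hkey : a * (φ (ξ (k + 1)) - φstar)
      + (x (k + 1) - xstar) ⬝ᵥ P.mulVec (x (k + 1) - xstar)
      ≤ ρ ^ 2 * (a * (φ (ξ k) - φstar)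
        + (x k - xstar) ⬝ᵥ P.mulVec (x k - xstar)) := by
    nlinarith [mul_le_mul_of_nonneg_left h2' (le_of_lt (mul_pos ha hρ2)),
      mul_le_mul_of_nonneg_left h3' (mul_nonneg ha.le (by nlinarith : (0:ℝ) ≤ 1 - ρ ^ 2))]
  have hp : 0 < ρ ^ (2 * k) := by positivity
  have hpow : ρ ^ (2 * (k + 1)) = ρ ^ (2 * k) * ρ ^ 2 := by ring
  rw [hpow, mul_inv, mul_assoc]
  refine mul_le_mul_of_nonneg_left ?_ (inv_nonneg.2 hp.le)
  rw [inv_mul_le_iff₀ hρ2]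
  linarith [hkey]
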